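/- Let $X$ be a complete separable metric space with Radon measure $\mu$ finite on bounded sets, and $f:X\to\mathbb{R}$ Lipschitz. If $\rho_i\in L^\infty(\mu)$, $i\in\mathbb{N}$, are weak $\ast$-upper gradients of $f$, then $\rho_\infty=\inf_i\rho_i$ is a weak $\ast$-upper gradient of $f$. -/

import Mathlib

open MeasureTheory Filter Topology Set
open scoped ENNReal NNReal

/-- A curve fragment: a bi-Lipschitz map from a nonempty compact subset of `ℝ` into `X`. -/
structure CurveFragment (X : Type*) [MetricSpace X] where
  toFun : ℝ → X
  dom : Set ℝ
  compact : IsCompact dom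
  nonempty : dom.Nonempty
  biLip : ∃ L : ℝ, 0 < L ∧ ∀ s ∈ dom, ∀ t ∈ dom,
    L⁻¹ * |s - t| ≤ dist (toFun s) (toFun t) ∧ dist (toFun s) (toFun t) ≤ L * |s - t|

namespace CurveFragment

variable {X : Type*} [MetricSpace X]

/-- The image of a curve fragment. -/
def im (γ : CurveFragment X) : Set X := γ.toFun '' γ.dom

/-- The pairs `(a, b)` of endpoints of the gaps of a curve fragment: maximal open intervals
in the convex hull of the domain that do not meet the domain. -/
def gapPairs (γ : CurveFragment X) : Set (ℝ × ℝ) :=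
  {p | p.1 ∈ γ.dom ∧ p.2 ∈ γ.dom ∧ p.1 < p.2 ∧ Set.Ioo p.1 p.2 ∩ γ.dom = ∅}

/-- `gap(γ)`: the sum of `d(γ(aᵢ), γ(bᵢ))` over the gaps `(aᵢ, bᵢ)` of `γ`. -/
noncomputable def gapLength (γ : CurveFragment X) : ℝ≥0∞ :=
  ∑' p : γ.gapPairs, edist (γ.toFun (p : ℝ × ℝ).1) (γ.toFun (p : ℝ × ℝ).2)

end CurveFragment

/-- The (global) Lipschitz constant `LIP(f)` of `f`, as an element of `ℝ≥0∞`. -/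
noncomputable def eLipConst {X : Type*} [MetricSpace X] (f : X → ℝ) : ℝ≥0∞ :=
  ⨅ (K : ℝ≥0) (_ : LipschitzWith K f), (K : ℝ≥0∞)

variable {X : Type*} [MetricSpace X] [MeasurableSpace X] [BorelSpace X]

/-- The `∞`-modulus of a family of curve fragments. -/
noncomputable def ModInfty (μ : Measure X) (Γ : Set (CurveFragment X)) : ℝ≥0∞ :=
  ⨅ (ρ : X → ℝ≥0∞) (_ : Measurable ρ)
    (_ : ∀ γ ∈ Γ, 1 ≤ ∫⁻ x in γ.im, ρ x ∂(μH[1] : Measure X)), essSup ρ μ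

/-- The `∗`-upper gradient inequality
`osc_γ f ≤ ∫_{im γ} g dH¹ + LIP(f) · gap(γ)` along a single curve fragment `γ`. -/
def StarUGIneqOn (f : X → ℝ) (g : X → ℝ≥0∞) (γ : CurveFragment X) : Prop :=
  ∀ s ∈ γ.dom, ∀ t ∈ γ.dom,
    ENNReal.ofReal |f (γ.toFun s) - f (γ.toFun t)| ≤
      (∫⁻ x in γ.im, g x ∂(μH[1] : Measure X)) + eLipConst f * γ.gapLength

/-- `g` is a `∗`-upper gradient of `f`. -/
def IsStarUG (f : X → ℝ) (g : X → ℝ≥0∞) : Prop :=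
  ∀ γ : CurveFragment X, StarUGIneqOn f g γ

/-- `g` is a weak `∗`-upper gradient of `f`: the `∗`-upper gradient inequality holds for all
curve fragments outside a family of `∞`-modulus zero. -/
def IsWeakStarUG (μ : Measure X) (f : X → ℝ) (g : X → ℝ≥0∞) : Prop :=
  ∃ Γ₀ : Set (CurveFragment X), ModInfty μ Γ₀ = 0 ∧
    ∀ γ ∉ Γ₀, StarUGIneqOn f g γ

/-- `D` is a (the) minimal `∗`-upper gradient `|Df|_∗` of `f`: a genuine `∗`-upper gradient
which is `μ`-a.e. below any weak `∗`-upper gradient lying in `L^∞(μ)`. -/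
def IsMinimalStarUG (μ : Measure X) (f : X → ℝ) (D : X → ℝ≥0∞) : Prop :=
  Measurable D ∧ IsStarUG f D ∧
    ∀ g : X → ℝ≥0∞, Measurable g → essSup g μ < ⊤ → IsWeakStarUG μ f g →
      ∀ᵐ x ∂μ, D x ≤ g x

/-!
Let `Mᵢ = ‖ρᵢ‖_∞` and let `N` be the `μ`-null set where some `ρᵢ > Mᵢ`. Curve fragments having a
restriction in the exceptional family of some `ρᵢ`, or whose image meets `N` in positive `H¹`
measure, form a family of `∞`-modulus zero. Off it, every `ρᵢ` satisfies the inequality along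
every restriction of `γ` and is bounded by `Mᵢ` `H¹`-a.e. on `im γ`.

For two such functions `g₁, g₂`, let `A` be the set of parameters where `g₁ ≤ g₂`, and squeeze
a finite union `V` of open intervals between a compact subset and an open superset of `A` that
are close to `A` in measure. Cutting `dom γ ∩ [s, t]` at the endpoints of these intervals leaves
pieces lying in `V` (use `g₁`) or outside `V` (use `g₂`); gluing across a cut with neighbours
`u < v` in `dom γ` costs `LIP(f) d(γ u, γ v)`, which the gap term pays for. Where the choice is
wrong, `gⱼ ≤ Mⱼ` and `γ` is Lipschitz, so the error is `O(|V ∆ A|)` and vanishes in the limit.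
Finite minima follow by induction, the countable infimum by monotone convergence.
-/

namespace CurveFragment

variable {X : Type*} [MetricSpace X]

def restrict (γ : CurveFragment X) (C : Set ℝ) (hC : IsCompact C) (hne : C.Nonempty)
    (hsub : C ⊆ γ.dom) : CurveFragment X where
  toFun := γ.toFun
  dom := C
  compact := hC
  nonempty := hne
  biLip := by
    obtain ⟨L, hL0, hL⟩ := γ.biLip
    exact ⟨L, hL0, fun s hs t ht => hL s (hsub hs) t (hsub ht)⟩

def IsRestriction (δ γ : CurveFragment X) : Prop :=
  δ.toFun = γ.toFun ∧ δ.dom ⊆ γ.dom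

theorem isRestriction_refl (γ : CurveFragment X) : γ.IsRestriction γ :=
  ⟨rfl, subset_rfl⟩

theorem IsRestriction.trans {γ₁ γ₂ γ₃ : CurveFragment X} (h₁₂ : γ₁.IsRestriction γ₂)
    (h₂₃ : γ₂.IsRestriction γ₃) : γ₁.IsRestriction γ₃ :=
  ⟨h₁₂.1.trans h₂₃.1, h₁₂.2.trans h₂₃.2⟩

theorem IsRestriction.im_subset {δ γ : CurveFragment X} (h : δ.IsRestriction γ) :
    δ.im ⊆ γ.im := by
  rw [im, im, h.1]
  exact image_mono h.2

theorem isRestriction_restrict (γ : CurveFragment X) {C : Set ℝ} (hC : IsCompact C)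
    (hne : C.Nonempty) (hsub : C ⊆ γ.dom) : (γ.restrict C hC hne hsub).IsRestriction γ :=
  ⟨rfl, hsub⟩

theorem exists_lipschitzOnWith (γ : CurveFragment X) :
    ∃ L : ℝ≥0, LipschitzOnWith L γ.toFun γ.dom := by
  obtain ⟨L, -, hL⟩ := γ.biLip
  refine ⟨L.toNNReal, LipschitzOnWith.of_dist_le_mul fun s hs t ht => ?_⟩
  rw [Real.dist_eq]
  exact (hL s hs t ht).2.trans (by gcongr; exact L.le_coe_toNNReal)

theorem continuousOn (γ : CurveFragment X) : ContinuousOn γ.toFun γ.dom :=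
  γ.exists_lipschitzOnWith.choose_spec.continuousOn

theorem injOn (γ : CurveFragment X) : InjOn γ.toFun γ.dom := by
  obtain ⟨L, hL0, hL⟩ := γ.biLip
  intro s hs t ht hst
  have h := (hL s hs t ht).1
  rw [hst, dist_self] at h
  have : |s - t| ≤ 0 := nonpos_of_mul_nonpos_right h (inv_pos.2 hL0)
  linarith [abs_nonpos_iff.1 this]

theorem isCompact_image {γ : CurveFragment X} {C : Set ℝ} (hC : IsCompact C)
    (hsub : C ⊆ γ.dom) : IsCompact (γ.toFun '' C) :=
  hC.image_of_continuousOn (γ.continuousOn.mono hsub)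

def restrictIcc (γ : CurveFragment X) {s t : ℝ} (hs : s ∈ γ.dom) (hst : s ≤ t) :
    CurveFragment X :=
  γ.restrict (γ.dom ∩ Icc s t) (γ.compact.inter_right isClosed_Icc) ⟨s, hs, le_rfl, hst⟩
    inter_subset_left

noncomputable def gapLengthIn (γ : CurveFragment X) (s t : ℝ) : ℝ≥0∞ :=
  ∑' p : ↥(γ.gapPairs ∩ Icc s t ×ˢ Icc s t), edist (γ.toFun (p : ℝ × ℝ).1) (γ.toFun (p : ℝ × ℝ).2)

theorem gapLengthIn_le_gapLength (γ : CurveFragment X) (s t : ℝ) :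
    γ.gapLengthIn s t ≤ γ.gapLength :=
  ENNReal.tsum_mono_subtype (fun p : ℝ × ℝ => edist (γ.toFun p.1) (γ.toFun p.2))
    inter_subset_left

theorem gapLength_restrictIcc_le (γ : CurveFragment X) {s t : ℝ} (hs : s ∈ γ.dom)
    (hst : s ≤ t) : (γ.restrictIcc hs hst).gapLength ≤ γ.gapLengthIn s t := by
  refine ENNReal.tsum_mono_subtype (fun p : ℝ × ℝ => edist (γ.toFun p.1) (γ.toFun p.2)) ?_
  rintro ⟨a, b⟩ ⟨⟨ha, has, hat⟩, ⟨hb, hbs, hbt⟩, hab, hgap⟩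
  refine ⟨⟨ha, hb, hab, eq_empty_of_forall_notMem fun x ⟨hx, hxd⟩ => ?_⟩,
    ⟨⟨has, hat⟩, hbs, hbt⟩⟩
  exact (eq_empty_iff_forall_notMem.1 hgap) x ⟨hx, hxd, has.trans hx.1.le, hx.2.le.trans hbt⟩

theorem gapLengthIn_add_edist_add_le (γ : CurveFragment X) {s u v t : ℝ} (hsu : s ≤ u)
    (huv : u ≤ v) (hvt : v ≤ t) (hu : u ∈ γ.dom) (hv : v ∈ γ.dom)
    (hgap : ∀ x ∈ γ.dom, x ∉ Ioo u v) :
    γ.gapLengthIn s u + edist (γ.toFun u) (γ.toFun v) + γ.gapLengthIn v t ≤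
      γ.gapLengthIn s t := by
  set w : ℝ × ℝ → ℝ≥0∞ := fun p => edist (γ.toFun p.1) (γ.toFun p.2)
  set P₁ := γ.gapPairs ∩ Icc s u ×ˢ Icc s u
  set P₂ := γ.gapPairs ∩ {(u, v)}
  set P₃ := γ.gapPairs ∩ Icc v t ×ˢ Icc v t
  have hw : w (u, v) ≤ ∑' p : P₂, w p := by
    rcases huv.eq_or_lt with rfl | huv
    · simp [w]
    · have hP₂ : P₂ = {(u, v)} := inter_eq_right.2 <| singleton_subset_iff.2
        ⟨hu, hv, huv, eq_empty_of_forall_notMem fun x hx => hgap x hx.2 hx.1⟩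
      rw [hP₂, tsum_singleton]
  have h₁₂ : Disjoint P₁ P₂ := disjoint_left.2 fun p ⟨_, _, hp⟩ ⟨hgp, hpuv⟩ => by
    rw [mem_singleton_iff.1 hpuv] at hp hgp
    exact hp.2.not_gt hgp.2.2.1
  have h₁₂₃ : Disjoint (P₁ ∪ P₂) P₃ := by
    refine disjoint_left.2 ?_
    rintro p hp ⟨hgp, hp₃, -⟩
    rcases hp with ⟨-, -, hp⟩ | ⟨-, hpuv⟩
    · exact hgp.2.2.1.not_ge (hp.2.trans (huv.trans hp₃.1))
    · rw [mem_singleton_iff.1 hpuv] at hgp hp₃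
      exact hgp.2.2.1.not_ge hp₃.1
  calc γ.gapLengthIn s u + w (u, v) + γ.gapLengthIn v t
      ≤ ∑' p : P₁, w p + ∑' p : P₂, w p + ∑' p : P₃, w p :=
        add_le_add (add_le_add le_rfl hw) le_rfl
    _ = ∑' p : ↥(P₁ ∪ P₂ ∪ P₃), w p := by
      rw [ENNReal.summable.tsum_union_disjoint h₁₂₃ ENNReal.summable,
        ENNReal.summable.tsum_union_disjoint h₁₂ ENNReal.summable]
    _ ≤ γ.gapLengthIn s t := by
      refine ENNReal.tsum_mono_subtype w (union_subset (union_subset ?_ ?_) ?_)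
      · exact fun p ⟨hgp, hp₁, hp₂⟩ =>
          ⟨hgp, ⟨hp₁.1, hp₁.2.trans (huv.trans hvt)⟩, hp₂.1, hp₂.2.trans (huv.trans hvt)⟩
      · rintro p ⟨hgp, hpuv⟩
        rw [mem_singleton_iff.1 hpuv] at hgp ⊢
        exact ⟨hgp, ⟨hsu, huv.trans hvt⟩, hsu.trans huv, hvt⟩
      · exact fun p ⟨hgp, hp₁, hp₂⟩ =>
          ⟨hgp, ⟨(hsu.trans huv).trans hp₁.1, hp₁.2⟩, (hsu.trans huv).trans hp₂.1, hp₂.2⟩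

end CurveFragment

theorem edist_le_eLipConst_mul {X : Type*} [MetricSpace X] (f : X → ℝ) (x y : X) :
    edist (f x) (f y) ≤ eLipConst f * edist x y := by
  rcases eq_or_ne x y with rfl | hxy
  · simp
  have h0 : edist x y ≠ 0 := (edist_pos.2 hxy).ne'
  rw [← ENNReal.div_le_iff h0 (edist_ne_top x y)]
  exact le_iInf₂ fun K hK => (ENNReal.div_le_iff h0 (edist_ne_top x y)).2 (hK x y)

theorem Set.Ioo_subset_Ioo_or_disjoint {s t a b : ℝ} (ha : a ∉ Ioo s t) (hb : b ∉ Ioo s t) :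
    Ioo s t ⊆ Ioo a b ∨ Disjoint (Ioo s t) (Ioo a b) := by
  by_cases h : a ≤ s ∧ t ≤ b
  · exact Or.inl (Ioo_subset_Ioo h.1 h.2)
  refine Or.inr (disjoint_left.2 fun x hx hx' => h ⟨?_, ?_⟩)
  · by_contra has
    exact ha ⟨lt_of_not_ge has, hx'.1.trans hx.2⟩
  · by_contra hbt
    exact hb ⟨hx.1.trans hx'.2, lt_of_not_ge hbt⟩

theorem Set.Ioo_subset_biUnion_Ioo_or_disjoint {s t : ℝ} {F : Finset (ℝ × ℝ)}
    (hF : ∀ p ∈ F, p.1 ∉ Ioo s t ∧ p.2 ∉ Ioo s t) :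
    Ioo s t ⊆ ⋃ p ∈ F, Ioo p.1 p.2 ∨ Disjoint (Ioo s t) (⋃ p ∈ F, Ioo p.1 p.2) := by
  by_cases h : ∃ p ∈ F, Ioo s t ⊆ Ioo p.1 p.2
  · obtain ⟨p, hp, hsub⟩ := h
    exact Or.inl (hsub.trans (subset_biUnion_of_mem (u := fun p : ℝ × ℝ => Ioo p.1 p.2) hp))
  push Not at h
  refine Or.inr (disjoint_iUnion₂_right.2 fun p hp => ?_)
  exact ((Ioo_subset_Ioo_or_disjoint (hF p hp).1 (hF p hp).2).resolve_left (h p hp))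

theorem IsCompact.exists_finset_biUnion_Ioo {C U : Set ℝ} (hC : IsCompact C) (hU : IsOpen U)
    (hCU : C ⊆ U) :
    ∃ F : Finset (ℝ × ℝ), C ⊆ ⋃ p ∈ F, Ioo p.1 p.2 ∧ ⋃ p ∈ F, Ioo p.1 p.2 ⊆ U := by
  have hball : ∀ x ∈ C, ∃ r > 0, Ioo (x - r) (x + r) ⊆ U := fun x hx => by
    obtain ⟨r, hr, hrU⟩ := Metric.isOpen_iff.1 hU x (hCU hx)
    exact ⟨r, hr, by rwa [← Real.ball_eq_Ioo]⟩
  choose! r hr hrU using hball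
  obtain ⟨t, htC, hCt⟩ := hC.elim_nhds_subcover (fun x => Ioo (x - r x) (x + r x))
    fun x hx => Ioo_mem_nhds (by linarith [hr x hx]) (by linarith [hr x hx])
  refine ⟨t.image fun x => (x - r x, x + r x), ?_, ?_⟩ <;>
    rw [Finset.set_biUnion_finset_image]
  · exact hCt
  · exact iUnion₂_subset fun x hx => hrU x (htC x hx)

theorem MeasurableSet.exists_finset_biUnion_Ioo_approx {A : Set ℝ} (hA : MeasurableSet A)
    (hAfin : volume A ≠ ⊤) {ε : ℝ≥0∞} (hε : ε ≠ 0) :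
    ∃ F : Finset (ℝ × ℝ), volume ((⋃ p ∈ F, Ioo p.1 p.2) \ A) ≤ ε ∧
      volume (A \ ⋃ p ∈ F, Ioo p.1 p.2) ≤ ε := by
  obtain ⟨C, hCA, hC, hAC⟩ := hA.exists_isCompact_sdiff_lt hAfin hε
  obtain ⟨U, hAU, hU, -, hUA⟩ := hA.exists_isOpen_sdiff_lt hAfin hε
  obtain ⟨F, hCV, hVU⟩ := hC.exists_finset_biUnion_Ioo hU (hCA.trans hAU)
  exact ⟨F, (measure_mono (sdiff_subset_sdiff_left hVU)).trans hUA.le,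
    (measure_mono (sdiff_subset_sdiff_right hCV)).trans hAC.le⟩

section MeasureLemmas

variable {α : Type*} [MeasurableSpace α] {ν : Measure α}

theorem setLIntegral_le_add_mul_of_le_off {g g' : α → ℝ≥0∞} {S T : Set α} {M : ℝ≥0∞}
    (hS : MeasurableSet S) (hT : MeasurableSet T) (hgM : ∀ᵐ x ∂ν.restrict S, g x ≤ M)
    (hgg' : ∀ x ∉ T, g x ≤ g' x) :
    ∫⁻ x in S, g x ∂ν ≤ ∫⁻ x in S, g' x ∂ν + M * ν (S ∩ T) := by
  rw [← lintegral_inter_add_sdiff g S hT, add_comm]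
  gcongr ?_ + ?_
  · calc ∫⁻ x in S \ T, g x ∂ν ≤ ∫⁻ x in S \ T, g' x ∂ν :=
          setLIntegral_mono' (hS.diff hT) fun x hx => hgg' x hx.2
      _ ≤ ∫⁻ x in S, g' x ∂ν := lintegral_mono_set sdiff_subset
  · calc ∫⁻ x in S ∩ T, g x ∂ν ≤ ∫⁻ _ in S ∩ T, M ∂ν :=
          lintegral_mono_ae (ae_restrict_of_ae_restrict_of_subset inter_subset_left hgM)
      _ = M * ν (S ∩ T) := setLIntegral_const _ _

theorem setLIntegral_add_le_of_measure_inter_eq_zero (g : α → ℝ≥0∞) {A B S : Set α}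
    (hB : MeasurableSet B) (hAB : ν (A ∩ B) = 0) (hsub : A ∪ B ⊆ S) :
    ∫⁻ x in A, g x ∂ν + ∫⁻ x in B, g x ∂ν ≤ ∫⁻ x in S, g x ∂ν := by
  rw [← lintegral_add_measure, ← Measure.restrict_union₀ hAB hB.nullMeasurableSet]
  exact lintegral_mono_set hsub

theorem measure_Ioo_add_measure_Ioo_le (ν : Measure ℝ) {s u v t : ℝ} (hsu : s ≤ u)
    (huv : u ≤ v) (hvt : v ≤ t) : ν (Ioo s u) + ν (Ioo v t) ≤ ν (Ioo s t) := by
  rw [← measure_union (disjoint_left.2 fun x hx hx' => (hx.2.trans_le huv).not_gt hx'.1)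
    measurableSet_Ioo]
  exact measure_mono (union_subset (Ioo_subset_Ioo_right (huv.trans hvt))
    (Ioo_subset_Ioo_left (hsu.trans huv)))

theorem ENNReal.le_of_forall_pos_le_add_mul {a b c : ℝ≥0∞} (hc : c ≠ ⊤)
    (h : ∀ δ : ℝ≥0∞, 0 < δ → a ≤ b + c * δ) : a ≤ b := by
  refine ENNReal.le_of_forall_pos_le_add fun ε hε _ => ?_
  refine (h (ε / c) (ENNReal.div_pos_iff.2 ⟨by exact_mod_cast hε.ne', hc⟩)).trans ?_
  gcongr
  exact ENNReal.mul_div_le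

end MeasureLemmas

theorem IsCompact.induction_on_cuts {K : Set ℝ} (hK : IsCompact K) (Q : Finset ℝ)
    {P : ℝ → ℝ → Prop}
    (base : ∀ s ∈ K, ∀ t ∈ K, s ≤ t → (∀ q ∈ Q, q ∉ Ioo s t) → P s t)
    (glue : ∀ s u v t, u ∈ K → v ∈ K → s ≤ u → u ≤ v → v ≤ t →
      (∀ x ∈ K, x ∉ Ioo u v) → P s u → P v t → P s t) :
    ∀ s ∈ K, ∀ t ∈ K, s ≤ t → P s t := by
  suffices ∀ Q' : Finset ℝ, ∀ s ∈ K, ∀ t ∈ K, s ≤ t → (∀ q ∈ Q, q ∈ Ioo s t → q ∈ Q') →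
      P s t from fun s hs t ht hst => this Q s hs t ht hst fun q hq _ => hq
  intro Q'
  induction Q' using Finset.strongInduction with
  | H Q' ih =>
  intro s hs t ht hst hQ'
  by_cases hq : ∃ q ∈ Q', q ∈ Ioo s t
  swap
  · push Not at hq
    exact base s hs t ht hst fun q hqQ hqI => hq q (hQ' q hqQ hqI) hqI
  obtain ⟨q, hqQ', hsq, hqt⟩ := hq
  obtain ⟨u, ⟨hu, hsu, huq⟩, hu_max⟩ :=
    (hK.inter_right isClosed_Icc).exists_isGreatest ⟨s, hs, le_rfl, hsq.le⟩
  obtain ⟨v, ⟨hv, hqv, hvt⟩, hv_min⟩ :=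
    (hK.inter_right isClosed_Icc).exists_isLeast ⟨t, ht, hqt.le, le_rfl⟩
  have hgap : ∀ x ∈ K, x ∉ Ioo u v := fun x hx hxI => by
    rcases le_or_gt x q with hxq | hqx
    · exact (hu_max ⟨hx, hsu.trans hxI.1.le, hxq⟩).not_gt hxI.1
    · exact (hv_min ⟨hx, hqx.le, hxI.2.le.trans hvt⟩).not_gt hxI.2
  have hsub := Finset.erase_ssubset hqQ'
  refine glue s u v t hu hv hsu (huq.trans hqv) hvt hgap
    (ih _ hsub s hs u hu hsu fun p hp hpI => Finset.mem_erase.2 ⟨?_, ?_⟩)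
    (ih _ hsub v hv t ht hvt fun p hp hpI => Finset.mem_erase.2 ⟨?_, ?_⟩)
  · exact (hpI.2.trans_le huq).ne
  · exact hQ' p hp (Ioo_subset_Ioo_right ((huq.trans hqv).trans hvt) hpI)
  · exact (hqv.trans_lt hpI.1).ne'
  · exact hQ' p hp (Ioo_subset_Ioo_left (hsu.trans (huq.trans hqv)) hpI)

section Modulus

variable {μ : Measure X} {Γ Γ' : Set (CurveFragment X)}

theorem modInfty_le {ρ : X → ℝ≥0∞} (hρ : Measurable ρ)
    (hadm : ∀ γ ∈ Γ, 1 ≤ ∫⁻ x in γ.im, ρ x ∂(μH[1] : Measure X)) :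
    ModInfty μ Γ ≤ essSup ρ μ :=
  iInf₂_le_of_le ρ hρ (iInf_le _ hadm)

theorem modInfty_eq_zero_iff :
    ModInfty μ Γ = 0 ↔ ∀ ε : ℝ≥0∞, 0 < ε → ∃ ρ : X → ℝ≥0∞, Measurable ρ ∧
      (∀ γ ∈ Γ, 1 ≤ ∫⁻ x in γ.im, ρ x ∂(μH[1] : Measure X)) ∧ essSup ρ μ ≤ ε := by
  refine ⟨fun h ε hε => ?_, fun h => ?_⟩
  · obtain ⟨ρ, hρ⟩ := iInf_lt_iff.1 (h.trans_lt hε)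
    obtain ⟨hmeas, hρ⟩ := iInf_lt_iff.1 hρ
    obtain ⟨hadm, hρ⟩ := iInf_lt_iff.1 hρ
    exact ⟨ρ, hmeas, hadm, hρ.le⟩
  · refine nonpos_iff_eq_zero.1 (ENNReal.le_of_forall_pos_le_add fun ε hε _ => ?_)
    obtain ⟨ρ, hmeas, hadm, hρ⟩ := h ε (by exact_mod_cast hε)
    rw [zero_add]
    exact (modInfty_le hmeas hadm).trans hρ

theorem modInfty_iUnion_eq_zero {ι : Type*} [Countable ι] {Γ : ι → Set (CurveFragment X)}
    (h : ∀ i, ModInfty μ (Γ i) = 0) : ModInfty μ (⋃ i, Γ i) = 0 := by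
  refine modInfty_eq_zero_iff.2 fun ε hε => ?_
  choose ρ hρ hadm hess using fun i => modInfty_eq_zero_iff.1 (h i) ε hε
  refine ⟨fun x => ⨆ i, ρ i x, Measurable.iSup hρ, ?_, ?_⟩
  · simp only [mem_iUnion]
    rintro γ ⟨i, hγ⟩
    exact (hadm i γ hγ).trans (lintegral_mono fun x => le_iSup (fun i => ρ i x) i)
  · refine essSup_le_of_ae_le ε ?_
    filter_upwards [ae_all_iff.2 fun i => ENNReal.ae_le_essSup (μ := μ) (ρ i)] with x hx
    exact iSup_le fun i => (hx i).trans (hess i)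

theorem modInfty_union_eq_zero (h : ModInfty μ Γ = 0) (h' : ModInfty μ Γ' = 0) :
    ModInfty μ (Γ ∪ Γ') = 0 := by
  rw [union_eq_iUnion]
  exact modInfty_iUnion_eq_zero (Bool.forall_bool.2 ⟨h', h⟩)

theorem modInfty_setOf_hausdorffMeasure_inter_ne_zero {N : Set X} (hN : MeasurableSet N)
    (hμN : μ N = 0) : ModInfty μ {γ : CurveFragment X | μH[1] (γ.im ∩ N) ≠ 0} = 0 := by
  have hadm : ∀ γ ∈ {γ : CurveFragment X | μH[1] (γ.im ∩ N) ≠ 0},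
      1 ≤ ∫⁻ x in γ.im, N.indicator (fun _ => ⊤) x ∂(μH[1] : Measure X) := fun γ hγ => by
    rw [lintegral_indicator hN, setLIntegral_const, Measure.restrict_apply hN, inter_comm,
      ENNReal.top_mul hγ]
    exact le_top
  refine nonpos_iff_eq_zero.1 ((modInfty_le (measurable_const.indicator hN) hadm).trans ?_)
  refine essSup_le_of_ae_le 0 ?_
  filter_upwards [measure_eq_zero_iff_ae_notMem.1 hμN] with x hx
  simp [hx]

theorem modInfty_le_of_forall_exists_im_subset (h : ∀ γ ∈ Γ', ∃ δ ∈ Γ, δ.im ⊆ γ.im) :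
    ModInfty μ Γ' ≤ ModInfty μ Γ :=
  le_iInf₂ fun ρ hρ => le_iInf fun hadm => modInfty_le hρ fun γ hγ => by
    obtain ⟨δ, hδ, hsub⟩ := h γ hγ
    exact (hadm δ hδ).trans (lintegral_mono_set hsub)

end Modulus

namespace CurveFragment

theorem measurableSet_dom_inter_preimage (γ : CurveFragment X) {T : Set X}
    (hT : MeasurableSet T) : MeasurableSet (γ.dom ∩ γ.toFun ⁻¹' T) := by
  have := γ.compact.measurableSet.subtype_image (γ.continuousOn.domRestrict.measurable hT)
  rwa [domRestrict_eq, preimage_comp, Subtype.image_preimage_coe] at this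

theorem exists_hausdorffMeasure_image_le (γ : CurveFragment X) :
    ∃ L : ℝ≥0, ∀ S ⊆ γ.dom, μH[1] (γ.toFun '' S) ≤ L * volume S := by
  obtain ⟨L, hL⟩ := γ.exists_lipschitzOnWith
  refine ⟨L, fun S hS => ?_⟩
  simpa [hausdorffMeasure_real] using (hL.mono hS).hausdorffMeasure_image_le zero_le_one

theorem hausdorffMeasure_im_lt_top (γ : CurveFragment X) : μH[1] γ.im < ⊤ := by
  obtain ⟨L, hL⟩ := γ.exists_hausdorffMeasure_image_le
  exact (hL _ subset_rfl).trans_lt (ENNReal.mul_lt_top ENNReal.coe_lt_top γ.compact.measure_lt_top)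

/-- The right-hand side of the `∗`-upper gradient inequality for `γ` restricted to `[s, t]`,
enlarged by the error `ν (s, t)`. -/
noncomputable def starUGBound (γ : CurveFragment X) (f : X → ℝ) (g : X → ℝ≥0∞)
    (ν : Measure ℝ) (s t : ℝ) : ℝ≥0∞ :=
  ∫⁻ x in γ.toFun '' (γ.dom ∩ Icc s t), g x ∂(μH[1] : Measure X) + ν (Ioo s t) +
    eLipConst f * γ.gapLengthIn s t

theorem starUGBound_mono_measure (γ : CurveFragment X) (f : X → ℝ) (g : X → ℝ≥0∞)
    {ν ν' : Measure ℝ} (h : ν ≤ ν') (s t : ℝ) :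
    γ.starUGBound f g ν s t ≤ γ.starUGBound f g ν' s t := by
  unfold starUGBound
  gcongr

theorem measurableSet_image_dom_inter_Icc (γ : CurveFragment X) (s t : ℝ) :
    MeasurableSet (γ.toFun '' (γ.dom ∩ Icc s t)) :=
  (isCompact_image (γ.compact.inter_right isClosed_Icc) inter_subset_left).measurableSet

theorem edist_le_starUGBound_of_split (γ : CurveFragment X) {f : X → ℝ} {g : X → ℝ≥0∞}
    {ν : Measure ℝ} {s u v t : ℝ} (hu : u ∈ γ.dom) (hv : v ∈ γ.dom) (hsu : s ≤ u)
    (huv : u ≤ v) (hvt : v ≤ t) (hgap : ∀ x ∈ γ.dom, x ∉ Ioo u v)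
    (h₁ : edist (f (γ.toFun s)) (f (γ.toFun u)) ≤ γ.starUGBound f g ν s u)
    (h₂ : edist (f (γ.toFun v)) (f (γ.toFun t)) ≤ γ.starUGBound f g ν v t) :
    edist (f (γ.toFun s)) (f (γ.toFun t)) ≤ γ.starUGBound f g ν s t := by
  have hinter : γ.toFun '' (γ.dom ∩ Icc s u) ∩ γ.toFun '' (γ.dom ∩ Icc v t) ⊆ {γ.toFun u} := by
    rw [← γ.injOn.image_inter inter_subset_left inter_subset_left, ← image_singleton]
    exact image_mono fun x ⟨⟨_, _, hxu⟩, _, hvx, _⟩ =>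
      mem_singleton_iff.2 (le_antisymm hxu (huv.trans hvx))
  have hI : ∫⁻ x in γ.toFun '' (γ.dom ∩ Icc s u), g x ∂(μH[1] : Measure X) +
      ∫⁻ x in γ.toFun '' (γ.dom ∩ Icc v t), g x ∂(μH[1] : Measure X) ≤
      ∫⁻ x in γ.toFun '' (γ.dom ∩ Icc s t), g x ∂(μH[1] : Measure X) := by
    have := Measure.nullSingletonClass_hausdorff X one_pos
    refine setLIntegral_add_le_of_measure_inter_eq_zero g
      (γ.measurableSet_image_dom_inter_Icc v t) (measure_mono_null hinter (measure_singleton _))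
      (union_subset (image_mono ?_) (image_mono ?_))
    · exact inter_subset_inter_right _ (Icc_subset_Icc_right (huv.trans hvt))
    · exact inter_subset_inter_right _ (Icc_subset_Icc_left (hsu.trans huv))
  calc edist (f (γ.toFun s)) (f (γ.toFun t))
      ≤ edist (f (γ.toFun s)) (f (γ.toFun u)) + edist (f (γ.toFun u)) (f (γ.toFun v)) +
          edist (f (γ.toFun v)) (f (γ.toFun t)) := edist_triangle4 _ _ _ _
    _ ≤ γ.starUGBound f g ν s u + eLipConst f * edist (γ.toFun u) (γ.toFun v) +
          γ.starUGBound f g ν v t := by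
      gcongr
      exact edist_le_eLipConst_mul f _ _
    _ = (∫⁻ x in γ.toFun '' (γ.dom ∩ Icc s u), g x ∂(μH[1] : Measure X) +
          ∫⁻ x in γ.toFun '' (γ.dom ∩ Icc v t), g x ∂(μH[1] : Measure X)) +
          (ν (Ioo s u) + ν (Ioo v t)) + eLipConst f * (γ.gapLengthIn s u +
            edist (γ.toFun u) (γ.toFun v) + γ.gapLengthIn v t) := by
      unfold starUGBound
      ring
    _ ≤ γ.starUGBound f g ν s t := by
      unfold starUGBound
      gcongr
      · exact measure_Ioo_add_measure_Ioo_le ν hsu huv hvt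
      · exact γ.gapLengthIn_add_edist_add_le hsu huv hvt hu hv hgap

theorem edist_le_starUGBound_of_le_off (γ : CurveFragment X) {f : X → ℝ}
    {g g' : X → ℝ≥0∞} {M : ℝ≥0∞} {L : ℝ≥0} {T : Set X} {Z : Set ℝ} {s t : ℝ}
    (hUG : ∀ δ, δ.IsRestriction γ → StarUGIneqOn f g δ)
    (hgM : ∀ᵐ x ∂(μH[1] : Measure X).restrict γ.im, g x ≤ M)
    (hL : ∀ S ⊆ γ.dom, μH[1] (γ.toFun '' S) ≤ L * volume S)
    (hT : MeasurableSet T) (hgg' : ∀ x ∉ T, g x ≤ g' x)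
    (hs : s ∈ γ.dom) (ht : t ∈ γ.dom) (hst : s ≤ t)
    (hZ : γ.dom ∩ Ioo s t ∩ γ.toFun ⁻¹' T ⊆ Z) :
    edist (f (γ.toFun s)) (f (γ.toFun t)) ≤
      γ.starUGBound f g' ((M * L) • volume.restrict Z) s t := by
  have hUGst := hUG (γ.restrictIcc hs hst) (γ.isRestriction_restrict _ _ _) s
    ⟨hs, le_rfl, hst⟩ t ⟨ht, hst, le_rfl⟩
  have hTZ : μH[1] (γ.toFun '' (γ.dom ∩ Icc s t) ∩ T) ≤ L * volume (Ioo s t ∩ Z) := by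
    rw [← image_inter_preimage]
    refine (hL _ (inter_subset_left.trans inter_subset_left)).trans (mul_le_mul_right ?_ _)
    calc volume (γ.dom ∩ Icc s t ∩ γ.toFun ⁻¹' T)
        = volume (γ.dom ∩ Ioo s t ∩ γ.toFun ⁻¹' T) :=
          measure_congr ((EventuallyEq.rfl.inter Ioo_ae_eq_Icc).inter EventuallyEq.rfl).symm
      _ ≤ volume (Ioo s t ∩ Z) := measure_mono (subset_inter (fun x hx => hx.1.2) hZ)
  rw [edist_dist, Real.dist_eq]
  calc ENNReal.ofReal |f (γ.toFun s) - f (γ.toFun t)|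
      ≤ ∫⁻ x in γ.toFun '' (γ.dom ∩ Icc s t), g x ∂(μH[1] : Measure X) +
          eLipConst f * (γ.restrictIcc hs hst).gapLength := hUGst
    _ ≤ (∫⁻ x in γ.toFun '' (γ.dom ∩ Icc s t), g' x ∂(μH[1] : Measure X) +
          M * μH[1] (γ.toFun '' (γ.dom ∩ Icc s t) ∩ T)) + eLipConst f * γ.gapLengthIn s t := by
      gcongr
      · exact setLIntegral_le_add_mul_of_le_off (γ.measurableSet_image_dom_inter_Icc s t) hT
          (ae_restrict_of_ae_restrict_of_subset (image_mono inter_subset_left) hgM) hgg'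
      · exact γ.gapLength_restrictIcc_le hs hst
    _ ≤ γ.starUGBound f g' ((M * L) • volume.restrict Z) s t := by
      rw [starUGBound, Measure.smul_apply, Measure.restrict_apply measurableSet_Ioo, smul_eq_mul,
        mul_assoc]
      gcongr

variable {γ : CurveFragment X} {f : X → ℝ}

section TwoGradients

variable {g₁ g₂ : X → ℝ≥0∞} {M₁ M₂ : ℝ≥0∞} {L : ℝ≥0}

theorem edist_le_starUGBound_inf (F : Finset (ℝ × ℝ))
    (hUG₁ : ∀ δ, δ.IsRestriction γ → StarUGIneqOn f g₁ δ)
    (hUG₂ : ∀ δ, δ.IsRestriction γ → StarUGIneqOn f g₂ δ)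
    (hb₁ : ∀ᵐ x ∂(μH[1] : Measure X).restrict γ.im, g₁ x ≤ M₁)
    (hb₂ : ∀ᵐ x ∂(μH[1] : Measure X).restrict γ.im, g₂ x ≤ M₂)
    (hE : MeasurableSet {x | g₂ x < g₁ x})
    (hL : ∀ S ⊆ γ.dom, μH[1] (γ.toFun '' S) ≤ L * volume S) {s t : ℝ} (hs : s ∈ γ.dom)
    (ht : t ∈ γ.dom) (hst : s ≤ t) :
    let V := ⋃ p ∈ F, Ioo p.1 p.2
    let A := γ.dom \ γ.toFun ⁻¹' {x | g₂ x < g₁ x}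
    edist (f (γ.toFun s)) (f (γ.toFun t)) ≤ γ.starUGBound f (g₁ ⊓ g₂)
      ((M₁ * L) • volume.restrict (V \ A) + (M₂ * L) • volume.restrict (A \ V)) s t := by
  intro V A
  refine γ.compact.induction_on_cuts (F.biUnion fun p => {p.1, p.2}) (fun s hs t ht hst hQ => ?_)
    (fun s u v t hu hv hsu huv hvt hgap h₁ h₂ =>
      γ.edist_le_starUGBound_of_split hu hv hsu huv hvt hgap h₁ h₂) s hs t ht hst
  have hF : ∀ p ∈ F, p.1 ∉ Ioo s t ∧ p.2 ∉ Ioo s t := fun p hp =>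
    ⟨hQ _ (Finset.mem_biUnion.2 ⟨p, hp, by simp⟩), hQ _ (Finset.mem_biUnion.2 ⟨p, hp, by simp⟩)⟩
  rcases Ioo_subset_biUnion_Ioo_or_disjoint hF with hV | hV
  · refine (γ.edist_le_starUGBound_of_le_off hUG₁ hb₁ hL hE (fun x hx => le_inf le_rfl
      (not_lt.1 hx)) hs ht hst ?_).trans
      (starUGBound_mono_measure _ _ _ (Measure.le_add_right le_rfl) _ _)
    exact fun x ⟨⟨_, hxI⟩, hxE⟩ => ⟨hV hxI, fun hxA => hxA.2 hxE⟩
  · refine (γ.edist_le_starUGBound_of_le_off hUG₂ hb₂ hL hE.compl (fun x hx => le_inf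
      (notMem_compl_iff.1 hx).le le_rfl) hs ht hst ?_).trans
      (starUGBound_mono_measure _ _ _ (Measure.le_add_left le_rfl) _ _)
    exact fun x ⟨⟨hx, hxI⟩, hxE⟩ => ⟨⟨hx, hxE⟩, disjoint_left.1 hV hxI⟩

theorem starUGIneqOn_of_forall_le {g : X → ℝ≥0∞}
    (h : ∀ s ∈ γ.dom, ∀ t ∈ γ.dom, s ≤ t → edist (f (γ.toFun s)) (f (γ.toFun t)) ≤
      ∫⁻ x in γ.im, g x ∂(μH[1] : Measure X) + eLipConst f * γ.gapLength) :
    StarUGIneqOn f g γ := fun s hs t ht => by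
  rw [← Real.dist_eq, ← edist_dist]
  rcases le_total s t with hst | hts
  · exact h s hs t ht hst
  · exact edist_comm (f (γ.toFun s)) _ ▸ h t ht s hs hts

theorem starUGIneqOn_inf (hUG₁ : ∀ δ, δ.IsRestriction γ → StarUGIneqOn f g₁ δ)
    (hUG₂ : ∀ δ, δ.IsRestriction γ → StarUGIneqOn f g₂ δ) (hg₁ : Measurable g₁)
    (hg₂ : Measurable g₂) (hM₁ : M₁ ≠ ⊤) (hM₂ : M₂ ≠ ⊤)
    (hb₁ : ∀ᵐ x ∂(μH[1] : Measure X).restrict γ.im, g₁ x ≤ M₁)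
    (hb₂ : ∀ᵐ x ∂(μH[1] : Measure X).restrict γ.im, g₂ x ≤ M₂) :
    StarUGIneqOn f (g₁ ⊓ g₂) γ := by
  obtain ⟨L, hL⟩ := γ.exists_hausdorffMeasure_image_le
  have hE : MeasurableSet {x | g₂ x < g₁ x} := measurableSet_lt hg₂ hg₁
  set A := γ.dom \ γ.toFun ⁻¹' {x | g₂ x < g₁ x}
  have hA : MeasurableSet A := by
    simpa only [A, sdiff_eq, ← preimage_compl] using γ.measurableSet_dom_inter_preimage hE.compl
  have hAfin : volume A ≠ ⊤ := (measure_mono sdiff_subset |>.trans_lt γ.compact.measure_lt_top).ne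
  refine starUGIneqOn_of_forall_le fun s hs t ht hst => ?_
  refine ENNReal.le_of_forall_pos_le_add_mul (c := (M₁ + M₂) * L) (by finiteness) fun ε hε => ?_
  obtain ⟨F, hVA, hAV⟩ := hA.exists_finset_biUnion_Ioo_approx hAfin hε.ne'
  set V := ⋃ p ∈ F, Ioo p.1 p.2
  have hν : ((M₁ * L) • volume.restrict (V \ A) + (M₂ * L) • volume.restrict (A \ V)) (Ioo s t)
      ≤ (M₁ + M₂) * L * ε := by
    simp only [Measure.add_apply, Measure.smul_apply, smul_eq_mul,
      Measure.restrict_apply measurableSet_Ioo]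
    calc M₁ * L * volume (Ioo s t ∩ (V \ A)) + M₂ * L * volume (Ioo s t ∩ (A \ V))
        ≤ M₁ * L * ε + M₂ * L * ε := by
          gcongr
          · exact (measure_mono inter_subset_right).trans hVA
          · exact (measure_mono inter_subset_right).trans hAV
      _ = (M₁ + M₂) * L * ε := by ring
  calc edist (f (γ.toFun s)) (f (γ.toFun t))
      ≤ γ.starUGBound f (g₁ ⊓ g₂)
          ((M₁ * L) • volume.restrict (V \ A) + (M₂ * L) • volume.restrict (A \ V)) s t :=
        edist_le_starUGBound_inf F hUG₁ hUG₂ hb₁ hb₂ hE hL hs ht hst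
    _ ≤ ∫⁻ x in γ.im, (g₁ ⊓ g₂) x ∂(μH[1] : Measure X) + (M₁ + M₂) * L * ε +
          eLipConst f * γ.gapLength := by
      unfold starUGBound
      gcongr
      · exact image_mono inter_subset_left
      · exact γ.gapLengthIn_le_gapLength s t
    _ = _ := by ring

end TwoGradients

theorem starUGIneqOn_iInf_of_antitone {g : ℕ → X → ℝ≥0∞} (hmeas : ∀ n, Measurable (g n))
    (hanti : Antitone g)
    (hfin : ∫⁻ x in γ.im, g 0 x ∂(μH[1] : Measure X) ≠ ⊤)
    (h : ∀ n, StarUGIneqOn f (g n) γ) : StarUGIneqOn f (fun x => ⨅ n, g n x) γ :=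
  fun s hs t ht => by
    rw [lintegral_iInf hmeas hanti hfin, ENNReal.iInf_add]
    exact le_iInf fun n => h n s hs t ht

/-- `g` is Borel, essentially bounded on `im γ` with respect to `H¹`, and satisfies the
`∗`-upper gradient inequality along every restriction of `γ`. -/
def IsBoundedStarUGAlong (f : X → ℝ) (g : X → ℝ≥0∞) (γ : CurveFragment X) : Prop :=
  Measurable g ∧ (∃ M ≠ ⊤, ∀ᵐ x ∂(μH[1] : Measure X).restrict γ.im, g x ≤ M) ∧
    ∀ δ, δ.IsRestriction γ → StarUGIneqOn f g δ

theorem IsBoundedStarUGAlong.inf {g₁ g₂ : X → ℝ≥0∞} (h₁ : IsBoundedStarUGAlong f g₁ γ)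
    (h₂ : IsBoundedStarUGAlong f g₂ γ) : IsBoundedStarUGAlong f (g₁ ⊓ g₂) γ := by
  obtain ⟨hg₁, ⟨M₁, hM₁, hb₁⟩, hUG₁⟩ := h₁
  obtain ⟨hg₂, ⟨M₂, hM₂, hb₂⟩, hUG₂⟩ := h₂
  refine ⟨hg₁.inf hg₂, ⟨M₁, hM₁, hb₁.mono fun x hx => inf_le_left.trans hx⟩, fun δ hδ => ?_⟩
  exact starUGIneqOn_inf (fun δ' h' => hUG₁ δ' (h'.trans hδ)) (fun δ' h' => hUG₂ δ' (h'.trans hδ))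
    hg₁ hg₂ hM₁ hM₂ (ae_restrict_of_ae_restrict_of_subset hδ.im_subset hb₁)
    (ae_restrict_of_ae_restrict_of_subset hδ.im_subset hb₂)

theorem IsBoundedStarUGAlong.biInf_le {ρ : ℕ → X → ℝ≥0∞}
    (h : ∀ i, IsBoundedStarUGAlong f (ρ i) γ) (n : ℕ) :
    IsBoundedStarUGAlong f (⨅ i ≤ n, ρ i) γ := by
  induction n with
  | zero => simpa using h 0
  | succ n ih => simpa only [Nat.iInf_le_succ] using ih.inf (h (n + 1))

theorem starUGIneqOn_iInf {ρ : ℕ → X → ℝ≥0∞} (h : ∀ i, IsBoundedStarUGAlong f (ρ i) γ) :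
    StarUGIneqOn f (fun x => ⨅ i, ρ i x) γ := by
  have hg := IsBoundedStarUGAlong.biInf_le h
  obtain ⟨M, hM, hb⟩ := (hg 0).2.1
  have hfin : ∫⁻ x in γ.im, (⨅ i ≤ 0, ρ i) x ∂(μH[1] : Measure X) ≠ ⊤ :=
    ((lintegral_mono_ae hb).trans_lt (by
      rw [setLIntegral_const]
      exact ENNReal.mul_lt_top hM.lt_top γ.hausdorffMeasure_im_lt_top)).ne
  have := starUGIneqOn_iInf_of_antitone (fun n => (hg n).1)
    (fun m n hmn => biInf_mono fun i hi => hi.trans hmn) hfin (fun n => (hg n).2.2 γ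
      (isRestriction_refl γ))
  simpa only [iInf_apply, biInf_le_eq_iInf] using this

end CurveFragment

theorem iInf_isWeakStarUG_general
    (μ : Measure X)
    (f : X → ℝ)
    (ρ : ℕ → X → ℝ≥0∞) (hmeas : ∀ i, Measurable (ρ i))
    (hbdd : ∀ i, essSup (ρ i) μ < ⊤)
    (hUG : ∀ i, IsWeakStarUG μ f (ρ i)) :
    IsWeakStarUG μ f (fun x => ⨅ i, ρ i x) := by
  choose Γ hΓ hUGΓ using hUG
  set N := ⋃ i, {x | essSup (ρ i) μ < ρ i x}
  have hN : MeasurableSet N := .iUnion fun i => measurableSet_lt measurable_const (hmeas i)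
  have hμN : μ N = 0 := measure_iUnion_null fun i => by
    simpa only [not_le] using ae_iff.1 (ENNReal.ae_le_essSup (μ := μ) (ρ i))
  set Bad := (⋃ i, Γ i) ∪ {γ : CurveFragment X | μH[1] (γ.im ∩ N) ≠ 0}
  refine ⟨{γ | ∃ δ ∈ Bad, δ.im ⊆ γ.im}, nonpos_iff_eq_zero.1 <|
    (modInfty_le_of_forall_exists_im_subset fun γ hγ => hγ).trans_eq <|
      modInfty_union_eq_zero (modInfty_iUnion_eq_zero hΓ)
        (modInfty_setOf_hausdorffMeasure_inter_ne_zero hN hμN), fun γ hγ => ?_⟩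
  simp only [Bad, mem_ofPred_eq, not_exists, not_and] at hγ
  have hγN : (μH[1] : Measure X).restrict γ.im N = 0 := by
    rw [Measure.restrict_apply hN, inter_comm]
    exact not_not.1 fun h => hγ γ (Or.inr h) subset_rfl
  refine CurveFragment.starUGIneqOn_iInf fun i => ⟨hmeas i, ⟨_, (hbdd i).ne, ?_⟩,
    fun δ hδ => hUGΓ i δ fun hδΓ => hγ δ (Or.inl (mem_iUnion.2 ⟨i, hδΓ⟩)) hδ.im_subset⟩
  filter_upwards [measure_eq_zero_iff_ae_notMem.1 hγN] with x hx
  exact not_lt.1 fun h => hx (mem_iUnion.2 ⟨i, h⟩)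

/-- The countable lattice property: the pointwise infimum of countably many
weak `∗`-upper gradients in `L^∞(μ)` of a Lipschitz function is again a weak `∗`-upper
gradient. -/
theorem iInf_isWeakStarUG
    [CompleteSpace X] [TopologicalSpace.SeparableSpace X]
    (μ : Measure X) (hμ : ∀ s : Set X, Bornology.IsBounded s → μ s < ⊤)
    (f : X → ℝ) (hf : ∃ K : ℝ≥0, LipschitzWith K f)
    (ρ : ℕ → X → ℝ≥0∞) (hmeas : ∀ i, Measurable (ρ i))
    (hbdd : ∀ i, essSup (ρ i) μ < ⊤)
    (hUG : ∀ i, IsWeakStarUG μ f (ρ i)) :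
    IsWeakStarUG μ f (fun x => ⨅ i, ρ i x) :=
  iInf_isWeakStarUG_general μ f ρ hmeas hbdd hUG
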